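/- Let Γ be a connected weighted graph of genus g, μ the canonical polarization of degree g-1, D a μ-semistable divisor, and φ an acyclic flow with 2D + Div(φ) = K_Γ. Then for a subset V of vertices, β_D(V) = 0 if and only if φ(e) = 1 for every oriented edge e from the complement of V into V. -/

import Mathlib

/-! A common framework for weighted multigraphs, divisors, flows,
subdivisions, pseudo-divisors and specializations, following
"The moduli space of quasistable spin curves". -/

noncomputable section

/-- A finite weighted multigraph (with a reference orientation of each edge). -/
structure WGraph where
  V : Type
  E : Type
  [fintV : Fintype V]
  [decV : DecidableEq V]
  [fintE : Fintype E]
  [decE : DecidableEq E]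
  src : E → V
  tgt : E → V
  w : V → ℕ

namespace WGraph

attribute [instance] WGraph.fintV WGraph.decV WGraph.fintE WGraph.decE

attribute [local instance] Classical.propDecidable

variable (G : WGraph)

/-- Degree of a vertex (loops count twice). -/
def deg (v : G.V) : ℕ :=
  (Finset.univ.filter (fun e => G.src e = v)).card +
    (Finset.univ.filter (fun e => G.tgt e = v)).card

/-- Degree of a vertex in the edge set `A` (loops count twice). -/
def degIn (A : Finset G.E) (v : G.V) : ℕ :=
  (A.filter (fun e => G.src e = v)).card + (A.filter (fun e => G.tgt e = v)).card

/-- Canonical divisor: `K(v) = 2 w(v) - 2 + deg(v)`. -/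
def K (v : G.V) : ℤ := 2 * (G.w v : ℤ) - 2 + (G.deg v : ℤ)

/-- Canonical polarization of degree `g - 1`. -/
def canPol (v : G.V) : ℚ := (G.K v : ℚ) / 2

/-- Oriented edges: `(e, true)` is `src → tgt`, `(e, false)` is the reverse. -/
abbrev OEdge := G.E × Bool

def osrc (oe : G.OEdge) : G.V := if oe.2 then G.src oe.1 else G.tgt oe.1

def otgt (oe : G.OEdge) : G.V := if oe.2 then G.tgt oe.1 else G.src oe.1

/-- A flow is recorded by its values along the reference orientation;
`flowVal` gives its value on an oriented edge. -/
def flowVal (φ : G.E → ℤ) (oe : G.OEdge) : ℤ := if oe.2 then φ oe.1 else -φ oe.1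

/-- The divisor of a flow: `Div(φ)(v) = ∑_{t(e) = v} φ(e)` over oriented edges. -/
def divOf (φ : G.E → ℤ) (v : G.V) : ℤ :=
  (∑ e : G.E, if G.tgt e = v then φ e else 0) -
    ∑ e : G.E, if G.src e = v then φ e else 0

/-- `e` has exactly one endpoint in `W`. -/
def crossing (W : Finset G.V) (e : G.E) : Prop := (G.src e ∈ W) ≠ (G.tgt e ∈ W)

/-- Number of edges between `W` and its complement. -/
def delta (W : Finset G.V) : ℕ := (Finset.univ.filter (fun e => G.crossing W e)).card

/-- `β_D(W) = deg(D|_W) - μ(W) + δ_W / 2`. -/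
def beta (μ : G.V → ℚ) (D : G.V → ℤ) (W : Finset G.V) : ℚ :=
  (∑ v ∈ W, (D v : ℚ)) - (∑ v ∈ W, μ v) + (G.delta W : ℚ) / 2

def Semistable (μ : G.V → ℚ) (D : G.V → ℤ) : Prop :=
  ∀ W : Finset G.V, W ≠ Finset.univ → 0 ≤ G.beta μ D W

def Stable (μ : G.V → ℚ) (D : G.V → ℤ) : Prop :=
  ∀ W : Finset G.V, W ≠ Finset.univ → W.Nonempty → 0 < G.beta μ D W

def Quasistable (μ : G.V → ℚ) (v₀ : G.V) (D : G.V → ℤ) : Prop :=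
  ∀ W : Finset G.V, W ≠ Finset.univ →
    (0 ≤ G.beta μ D W ∧ (v₀ ∈ W → 0 < G.beta μ D W))

/-- An oriented cycle: a nonempty cyclically closed chain of oriented edges,
with pairwise distinct underlying edges and pairwise distinct vertices. -/
def IsOrientedCycle (c : List G.OEdge) : Prop :=
  c ≠ [] ∧ (c.map Prod.fst).Nodup ∧ (c.map G.osrc).Nodup ∧
    ∀ i : Fin c.length,
      G.otgt (c.get i) = G.osrc (c.get ⟨((i : ℕ) + 1) % c.length, Nat.mod_lt _ i.pos⟩)

/-- A flow is acyclic if there is no oriented cycle on which it is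
nonnegative and somewhere positive. -/
def Acyclic (φ : G.E → ℤ) : Prop :=
  ¬∃ c : List G.OEdge, G.IsOrientedCycle c ∧ (∀ oe ∈ c, 0 ≤ G.flowVal φ oe) ∧
      ∃ oe ∈ c, 0 < G.flowVal φ oe

/-- Adjacency through an edge of `A`. -/
def adjVia (A : Finset G.E) (a b : G.V) : Prop :=
  ∃ e ∈ A, (G.src e = a ∧ G.tgt e = b) ∨ (G.src e = b ∧ G.tgt e = a)

/-- Reachability using only edges of `A`. -/
def ReachVia (A : Finset G.E) : G.V → G.V → Prop := Relation.ReflTransGen (G.adjVia A)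

def Connected : Prop := Nonempty G.V ∧ ∀ u v : G.V, G.ReachVia Finset.univ u v

/-- A cyclic subgraph: a set of edges in which every vertex has even degree. -/
def IsCyclicSubgraph (P : Finset G.E) : Prop := ∀ v : G.V, Even (G.degIn P v)

/-- The characteristic flow of a vertex. -/
def charFlow (v₀ : G.V) (e : G.E) : ℤ :=
  if G.src e = v₀ ∧ G.tgt e ≠ v₀ then 1
  else if G.tgt e = v₀ ∧ G.src e ≠ v₀ then -1 else 0

/-- `Div(v₀)`, the principal divisor attached to a vertex. -/
def DivV (v₀ : G.V) : G.V → ℤ := G.divOf (G.charFlow v₀)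

/-- Principal divisors are integer combinations of the `Div(v)`. -/
def Principal (D : G.V → ℤ) : Prop :=
  ∃ a : G.V → ℤ, ∀ v, D v = ∑ u : G.V, a u * G.DivV u v

/-- Number of connected components of the subgraph with all vertices and
edge set `A`. -/
def numComponents (A : Finset G.E) : ℕ :=
  (Finset.univ.image (fun v => Finset.univ.filter (fun u => G.ReachVia A v u))).card

/-- The subdivision `Γ^S`: one exceptional vertex inserted in each edge of `S`. -/
def subdiv (S : Finset G.E) : WGraph where
  V := G.V ⊕ {e // e ∈ S}
  E := {e // e ∉ S} ⊕ {e // e ∈ S} × Bool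
  src := fun x =>
    match x with
    | .inl e => .inl (G.src e.1)
    | .inr (e, b) => if b then .inr e else .inl (G.src e.1)
  tgt := fun x =>
    match x with
    | .inl e => .inl (G.tgt e.1)
    | .inr (e, b) => if b then .inl (G.tgt e.1) else .inr e
  w := fun v =>
    match v with
    | .inl v => G.w v
    | .inr _ => 0

/-- A pseudo-divisor: value `-1` on every exceptional vertex. -/
def IsPseudoDivisor (S : Finset G.E) (D : (G.subdiv S).V → ℤ) : Prop :=
  ∀ x : {e // e ∈ S}, D (Sum.inr x) = -1

/-- A pseudo-root: `2 D + Div(φ) = K_{Γ^S}` for some acyclic flow `φ` on `Γ^S`. -/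
def IsPseudoRoot (S : Finset G.E) (D : (G.subdiv S).V → ℤ) : Prop :=
  G.IsPseudoDivisor S D ∧
    ∃ φ : (G.subdiv S).E → ℤ, (G.subdiv S).Acyclic φ ∧
      ∀ v, 2 * D v + (G.subdiv S).divOf φ v = (G.subdiv S).K v

/-- Semistability of a pseudo-divisor: semistability on the subdivision with
respect to the (extended) canonical polarization. -/
def IsSemistablePR (S : Finset G.E) (D : (G.subdiv S).V → ℤ) : Prop :=
  (G.subdiv S).Semistable (G.subdiv S).canPol D

/-- `β_{E,D}` for pseudo-divisors, on subsets of the original vertices. -/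
def betaPoly (S : Finset G.E) (D : (G.subdiv S).V → ℤ) (W : Finset G.V) : ℚ :=
  (∑ v ∈ W, (D (Sum.inl v) : ℚ)) -
    (∑ v ∈ W, (G.canPol v + (G.degIn S v : ℚ) / 2)) +
    ((Finset.univ.filter (fun e => e ∉ S ∧ G.crossing W e)).card : ℚ) / 2

/-- Polystability of a pseudo-divisor. -/
def IsPolystable (S : Finset G.E) (D : (G.subdiv S).V → ℤ) : Prop :=
  ∀ W : Finset G.V,
    0 ≤ G.betaPoly S D W ∧ ((∃ e, e ∉ S ∧ G.crossing W e) → 0 < G.betaPoly S D W)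

/-- The divisor `D_P` attached to a cyclic subgraph `P`, on `Γ^{E_P}` with
`E_P = Pᶜ`. -/
def DP (P : Finset G.E) : (G.subdiv Pᶜ).V → ℤ := fun x =>
  match x with
  | .inl v => (G.deg v : ℤ) - (G.degIn P v : ℤ) / 2 - 1 + (G.w v : ℤ)
  | .inr _ => -1

/-- The data of a semistable root-graph together with its acyclic flow. -/
def IsSemistableRootTriple (S : Finset G.E) (D : (G.subdiv S).V → ℤ)
    (φ : (G.subdiv S).E → ℤ) : Prop :=
  G.IsPseudoDivisor S D ∧ G.IsSemistablePR S D ∧ (G.subdiv S).Acyclic φ ∧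
    ∀ v, 2 * D v + (G.subdiv S).divOf φ v = (G.subdiv S).K v

/-- The induced subgraph on a vertex set `W`. -/
def induce (W : Finset G.V) : WGraph where
  V := {v // v ∈ W}
  E := {e // G.src e ∈ W ∧ G.tgt e ∈ W}
  src := fun e => ⟨G.src e.1, e.2.1⟩
  tgt := fun e => ⟨G.tgt e.1, e.2.2⟩
  w := fun v => G.w v.1

/-- Number of edges between `W` and `Wᶜ` incident to `v`. -/
def degCross (W : Finset G.V) (v : G.V) : ℕ :=
  (Finset.univ.filter (fun e => G.src e = v ∧ G.crossing W e)).card +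
    (Finset.univ.filter (fun e => G.tgt e = v ∧ G.crossing W e)).card

/-- A specialization (iterated edge contraction) of weighted graphs. -/
structure Spec (G G' : WGraph) where
  vmap : G.V → G'.V
  emap : G'.E → G.E
  emap_inj : Function.Injective emap
  vmap_surj : Function.Surjective vmap
  src_comm : ∀ e', vmap (G.src (emap e')) = G'.src e'
  tgt_comm : ∀ e', vmap (G.tgt (emap e')) = G'.tgt e'
  contract_eq : ∀ e : G.E, e ∉ Finset.univ.image emap → vmap (G.src e) = vmap (G.tgt e)
  fiber_conn : ∀ u v : G.V, vmap u = vmap v →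
    Relation.ReflTransGen
      (fun a b => ∃ e, e ∉ Finset.univ.image emap ∧
        ((G.src e = a ∧ G.tgt e = b) ∨ (G.src e = b ∧ G.tgt e = a))) u v
  weight_eq : ∀ v' : G'.V,
    (G'.w v' : ℤ) =
      (∑ v ∈ Finset.univ.filter (fun v => vmap v = v'), (G.w v : ℤ)) +
        ((Finset.univ.filter (fun e : G.E =>
            e ∉ Finset.univ.image emap ∧ vmap (G.src e) = v')).card : ℤ) -
        ((Finset.univ.filter (fun v : G.V => vmap v = v')).card : ℤ) + 1

/-- Pushforward of a divisor along a specialization. -/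
def Spec.pushDiv {G G' : WGraph} (σ : Spec G G') (D : G.V → ℤ) : G'.V → ℤ :=
  fun v' => ∑ v ∈ Finset.univ.filter (fun v => σ.vmap v = v'), D v

/-- Pushforward of a polarization along a specialization. -/
def Spec.pushPol {G G' : WGraph} (σ : Spec G G') (μ : G.V → ℚ) : G'.V → ℚ :=
  fun v' => ∑ v ∈ Finset.univ.filter (fun v => σ.vmap v = v'), μ v

/-- The induced map on vertices of subdivisions. -/
def Spec.subdivVmap {G G' : WGraph} (σ : Spec G G') (S : Finset G.E)
    (S' : Finset G'.E) : (G.subdiv S).V → (G'.subdiv S').V := fun x =>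
  match x with
  | .inl v => .inl (σ.vmap v)
  | .inr e =>
    if h : ∃ e' : {e' // e' ∈ S'}, σ.emap e'.1 = e.1 then .inr h.choose
    else .inl (σ.vmap (G.src e.1))

/-- Pushforward of a pseudo-divisor (its divisor part) along a specialization. -/
def Spec.pushSubdivDiv {G G' : WGraph} (σ : Spec G G') (S : Finset G.E)
    (S' : Finset G'.E) (D : (G.subdiv S).V → ℤ) : (G'.subdiv S').V → ℤ := fun y =>
  ∑ x ∈ Finset.univ.filter (fun x => σ.subdivVmap S S' x = y), D x

/-- Extension by zero along the edge injection of a specialization. -/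
def Spec.extendBy {G G' : WGraph} (σ : Spec G G') (x : G'.E → ℝ) : G.E → ℝ :=
  fun e => if h : ∃ e', σ.emap e' = e then x h.choose else 0

/-- Same-graph contraction of subdivisions (for `S ⊆ S'`): the vertex map.
`σb e` selects the endpoint to which the exceptional vertex of a contracted
edge `e ∈ S' \ S` is merged (`true` = target, `false` = source). -/
def contrVmap (S S' : Finset G.E) (σb : G.E → Bool) :
    (G.subdiv S').V → (G.subdiv S).V := fun x =>
  match x with
  | .inl v => .inl v
  | .inr e =>
    if h : e.1 ∈ S then .inr ⟨e.1, h⟩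
    else .inl (if σb e.1 then G.tgt e.1 else G.src e.1)

/-- Same-graph contraction of subdivisions: the edge injection. -/
def contrEmap (S S' : Finset G.E) (hSS : S ⊆ S') (σb : G.E → Bool) :
    (G.subdiv S).E → (G.subdiv S').E := fun x =>
  match x with
  | .inl e =>
    if h : e.1 ∈ S' then .inr (⟨e.1, h⟩, !σb e.1) else .inl ⟨e.1, h⟩
  | .inr eb => .inr (⟨eb.1.1, hSS eb.1.2⟩, eb.2)

/-- Specialization of pseudo-divisors over a fixed graph. -/
def PDSpec (S' : Finset G.E) (D' : (G.subdiv S').V → ℤ) (S : Finset G.E)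
    (D : (G.subdiv S).V → ℤ) : Prop :=
  S ⊆ S' ∧ ∃ σb : G.E → Bool,
    ∀ v, D v = ∑ x ∈ Finset.univ.filter (fun x => G.contrVmap S S' σb x = v), D' x

/-- Specialization of semistable root-graphs over a fixed graph: a
specialization of pseudo-divisors pushing the acyclic flow forward. -/
def RootSpec (S' : Finset G.E) (D' : (G.subdiv S').V → ℤ) (S : Finset G.E)
    (D : (G.subdiv S).V → ℤ) : Prop :=
  ∃ hSS : S ⊆ S', ∃ σb : G.E → Bool,
    (∀ v, D v = ∑ x ∈ Finset.univ.filter (fun x => G.contrVmap S S' σb x = v), D' x) ∧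
    ∀ φ' φ : _, (G.subdiv S').Acyclic φ' →
      (∀ v, 2 * D' v + (G.subdiv S').divOf φ' v = (G.subdiv S').K v) →
      (G.subdiv S).Acyclic φ →
      (∀ v, 2 * D v + (G.subdiv S).divOf φ v = (G.subdiv S).K v) →
      ∀ x, φ x = φ' (G.contrEmap S S' hSS σb x)

/-- Underlying edge of `Γ` of an edge of `Γ^S`. -/
def underE (S : Finset G.E) : (G.subdiv S).E → G.E := fun x =>
  match x with
  | .inl e => e.1
  | .inr eb => eb.1.1

/-- A specialization of triples `(Γ, E, D) ≥ (Γ', E', D')`. -/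
structure TripleSpec (G : WGraph) (S : Finset G.E) (D : (G.subdiv S).V → ℤ)
    (G' : WGraph) (S' : Finset G'.E) (D' : (G'.subdiv S').V → ℤ) where
  base : Spec G G'
  sub : Spec (G.subdiv S) (G'.subdiv S')
  vcomm : ∀ v : G.V, sub.vmap (Sum.inl v) = Sum.inl (base.vmap v)
  ecomm : ∀ x : (G'.subdiv S').E, G.underE S (sub.emap x) = base.emap (G'.underE S' x)
  edges_sub : ∀ e' ∈ S', base.emap e' ∈ S
  push_eq : ∀ y, D' y = ∑ x ∈ Finset.univ.filter (fun x => sub.vmap x = y), D x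

/-- A triple specialization is a specialization of root-graphs when it pushes
the (unique) acyclic flows forward. -/
def TripleSpec.IsRootSpec {G : WGraph} {S : Finset G.E} {D : (G.subdiv S).V → ℤ}
    {G' : WGraph} {S' : Finset G'.E} {D' : (G'.subdiv S').V → ℤ}
    (T : TripleSpec G S D G' S' D') : Prop :=
  ∀ φ φ', (G.subdiv S).Acyclic φ →
    (∀ v, 2 * D v + (G.subdiv S).divOf φ v = (G.subdiv S).K v) →
    (G'.subdiv S').Acyclic φ' →
    (∀ v, 2 * D' v + (G'.subdiv S').divOf φ' v = (G'.subdiv S').K v) →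
    ∀ x, φ' x = φ (T.sub.emap x)

/-- The cone `λ` attached to a flow: nonnegative orthant cut by the cycle
equations. -/
def lambdaSet (φ : G.E → ℤ) : Set (G.E → ℝ) :=
  {x | (∀ e, 0 ≤ x e) ∧ ∀ c : List G.OEdge, G.IsOrientedCycle c →
      ((c.map (fun oe => (G.flowVal φ oe : ℝ) * x oe.1)).sum) = 0}

/-- Its relative interior (intersection with the positive orthant). -/
def lambdaInt (φ : G.E → ℤ) : Set (G.E → ℝ) :=
  {x | (∀ e, 0 < x e) ∧ ∀ c : List G.OEdge, G.IsOrientedCycle c →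
      ((c.map (fun oe => (G.flowVal φ oe : ℝ) * x oe.1)).sum) = 0}

/-- Faces of a cone (supporting-hyperplane definition). -/
def IsFaceOf (F C : Set (G.E → ℝ)) : Prop :=
  F = C ∨ ∃ l : (G.E → ℝ) →ₗ[ℝ] ℝ, (∀ x ∈ C, 0 ≤ l x) ∧ F = C ∩ {x | l x = 0}

/-- Facets: faces of codimension one. -/
def IsFacetOf (F C : Set (G.E → ℝ)) : Prop :=
  G.IsFaceOf F C ∧
    Module.finrank ℝ (Submodule.span ℝ F) + 1 = Module.finrank ℝ (Submodule.span ℝ C)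

/-- The vector `u_V` spanning the subspace `L_E`. -/
def uVec (S : Finset G.E) (W : Finset G.V) : (G.subdiv S).E → ℝ := fun x =>
  match x with
  | .inl _ => 0
  | .inr eb =>
    if G.crossing W eb.1.1 then
      (if (if eb.2 then G.tgt eb.1.1 else G.src eb.1.1) ∈ W then 1 else -1)
    else 0

/-- The subspace `L_E ⊆ ℝ^{E(Γ^S)}`. -/
def LSub (S : Finset G.E) : Submodule ℝ ((G.subdiv S).E → ℝ) :=
  Submodule.span ℝ {u | ∃ W : Finset G.V, (∀ e, G.crossing W e → e ∈ S) ∧ u = G.uVec S W}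

/-- The diagonal map `δ_E : ℝ^{E(Γ)} → ℝ^{E(Γ^S)}`. -/
def deltaMap (S : Finset G.E) (x : G.E → ℝ) : (G.subdiv S).E → ℝ := fun e' =>
  match e' with
  | .inl e => x e.1
  | .inr eb => x eb.1.1

/-- One step of a `φ`-path avoiding the edges of `A`. -/
def phiStep (φ : G.E → ℤ) (A : Finset G.E) (a b : G.V) : Prop :=
  ∃ oe : G.OEdge, oe.1 ∉ A ∧ 0 ≤ G.flowVal φ oe ∧ G.osrc oe = a ∧ G.otgt oe = b

/-- Reachability by `φ`-paths avoiding the edges of `A`. -/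
def PhiReach (φ : G.E → ℤ) (A : Finset G.E) : G.V → G.V → Prop :=
  Relation.ReflTransGen (G.phiStep φ A)

/-- The refinement of `Γ` inserting `m e` vertices in the interior of each
edge `e`. -/
def refine (m : G.E → ℕ) : WGraph where
  V := G.V ⊕ (Σ e : G.E, Fin (m e))
  E := Σ e : G.E, Fin (m e + 1)
  src := fun x =>
    if h : (x.2 : ℕ) = 0 then .inl (G.src x.1)
    else .inr ⟨x.1, ⟨(x.2 : ℕ) - 1, by have := x.2.isLt; omega⟩⟩
  tgt := fun x =>
    if h : (x.2 : ℕ) = m x.1 then .inl (G.tgt x.1)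
    else .inr ⟨x.1, ⟨(x.2 : ℕ), by have := x.2.isLt; omega⟩⟩
  w := fun v =>
    match v with
    | .inl v => G.w v
    | .inr _ => 0

end WGraph

/-! Summing `2D + Div(φ) = K` over `W` gives `2 β_D(W) = ∑ (1 - φ(e))` over the oriented edges `e`
entering `W`, since `Div(φ)(W)` is the net flow into `W`. Every term is nonnegative: if
`φ(e) ≥ 2`, the set `Z` of vertices reachable from the head of `e` along edges of nonnegative
flow misses the tail of `e` by acyclicity, every edge entering `Z` has flow at least `1`, and so
`β_D(Z) < 0`, against semistability. Hence `β_D(W) = 0` exactly when every term vanishes. -/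

namespace WGraph

variable {G : WGraph} {D : G.V → ℤ} {φ : G.E → ℤ}

@[simp] theorem osrc_flip (e : G.E) (b : Bool) : G.osrc (e, !b) = G.otgt (e, b) := by
  cases b <;> rfl

@[simp] theorem otgt_flip (e : G.E) (b : Bool) : G.otgt (e, !b) = G.osrc (e, b) := by
  cases b <;> rfl

@[simp] theorem flowVal_flip (φ : G.E → ℤ) (e : G.E) (b : Bool) :
    G.flowVal φ (e, !b) = -G.flowVal φ (e, b) := by
  cases b <;> simp [flowVal]

theorem eq_or_eq_flip_of_fst_eq {x y : G.OEdge} (h : x.1 = y.1) :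
    x = y ∨ x = (y.1, !y.2) := by
  obtain ⟨e, b⟩ := x
  obtain ⟨e', b'⟩ := y
  cases b <;> cases b' <;> simp_all

/-- `L` is a walk from `a` to `b`. The single list equation says at once that `L` starts at `a`,
that consecutive edges are head-to-tail, and that `L` ends at `b`. -/
def IsWalk (a : G.V) (L : List G.OEdge) (b : G.V) : Prop :=
  L.map G.osrc ++ [b] = a :: L.map G.otgt

@[simp] theorem isWalk_nil {a b : G.V} : G.IsWalk a [] b ↔ b = a := by
  simp [IsWalk]

@[simp] theorem isWalk_cons {a b : G.V} {oe : G.OEdge} {L : List G.OEdge} :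
    G.IsWalk a (oe :: L) b ↔ G.osrc oe = a ∧ G.IsWalk (G.otgt oe) L b := by
  simp [IsWalk]

theorem IsWalk.append {a b c : G.V} {L L' : List G.OEdge} (h : G.IsWalk a L b)
    (h' : G.IsWalk b L' c) : G.IsWalk a (L ++ L') c := by
  induction L generalizing a with
  | nil =>
    obtain rfl := isWalk_nil.mp h
    simpa using h'
  | cons oe L ih =>
    obtain ⟨rfl, hL⟩ := isWalk_cons.mp h
    exact isWalk_cons.mpr ⟨rfl, ih hL⟩

theorem IsWalk.osrc_mem {a b : G.V} {L : List G.OEdge} (h : G.IsWalk a L b) {oe : G.OEdge}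
    (hoe : oe ∈ L) : G.osrc oe ∈ a :: L.map G.otgt := by
  rw [← h]
  exact List.mem_append_left _ (List.mem_map_of_mem hoe)

theorem IsWalk.exists_suffix {c b : G.V} {L : List G.OEdge} (h : G.IsWalk c L b) {a : G.V}
    (ha : a ∈ c :: L.map G.otgt) : ∃ L', L' <:+ L ∧ G.IsWalk a L' b := by
  induction L generalizing c with
  | nil =>
    obtain rfl : a = c := by simpa using ha
    exact ⟨[], List.suffix_refl _, h⟩
  | cons oe L ih =>
    obtain ⟨rfl, hL⟩ := isWalk_cons.mp h
    rcases List.mem_cons.mp ha with rfl | ha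
    · exact ⟨oe :: L, List.suffix_refl _, h⟩
    · obtain ⟨L', hL', hw⟩ := ih hL (by simpa using ha)
      exact ⟨L', hL'.trans (List.suffix_cons _ _), hw⟩

theorem IsWalk.nodup_fst {a b : G.V} {L : List G.OEdge} (h : G.IsWalk a L b)
    (hnd : (a :: L.map G.otgt).Nodup) : (L.map Prod.fst).Nodup := by
  induction L generalizing a with
  | nil => simp
  | cons oe L ih =>
    obtain ⟨rfl, hL⟩ := isWalk_cons.mp h
    rw [List.map_cons, List.nodup_cons] at hnd ⊢
    refine ⟨fun hmem => ?_, ih hL hnd.2⟩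
    obtain ⟨oe', hoe', hfst⟩ := List.mem_map.mp hmem
    apply hnd.1
    rcases eq_or_eq_flip_of_fst_eq hfst with rfl | rfl
    · exact hL.osrc_mem hoe'
    · simpa using List.mem_cons_of_mem _ (List.mem_map_of_mem (f := G.otgt) hoe')

theorem IsWalk.isOrientedCycle {a : G.V} {c : List G.OEdge} (h : G.IsWalk a c a)
    (hne : c ≠ []) (hfst : (c.map Prod.fst).Nodup) (hsrc : (c.map G.osrc).Nodup) :
    G.IsOrientedCycle c := by
  have hrot : c.map G.otgt = (c.map G.osrc).rotate 1 := by
    obtain ⟨oe, c', rfl⟩ := List.exists_cons_of_ne_nil hne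
    obtain ⟨rfl, hc'⟩ := isWalk_cons.mp h
    simpa [IsWalk] using hc'.symm
  refine ⟨hne, hfst, hsrc, fun i => ?_⟩
  simpa using congrArg (·[(i : ℕ)]?) hrot

theorem PhiReach.exists_nodup_walk {a b : G.V} (h : G.PhiReach φ ∅ a b) :
    ∃ L, G.IsWalk a L b ∧ (a :: L.map G.otgt).Nodup ∧ ∀ oe ∈ L, 0 ≤ G.flowVal φ oe := by
  induction h using Relation.ReflTransGen.head_induction_on with
  | refl => exact ⟨[], isWalk_nil.mpr rfl, List.nodup_singleton _, by simp⟩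
  | @head a c hstep _ ih =>
    obtain ⟨oe, -, hnn, hsrc, htgt⟩ := hstep
    obtain ⟨L, hL, hnd, hflow⟩ := ih
    by_cases ha : a ∈ c :: L.map G.otgt
    · obtain ⟨L', hsuff, hL'⟩ := hL.exists_suffix ha
      have hvert : a :: L'.map G.otgt <:+ c :: L.map G.otgt := by
        rw [← hL', ← hL]
        exact List.suffix_append_self_iff.mpr (hsuff.map G.osrc)
      exact ⟨L', hL', hnd.sublist hvert.sublist, fun oe' h' => hflow oe' (hsuff.subset h')⟩
    · subst htgt
      exact ⟨oe :: L, isWalk_cons.mpr ⟨hsrc, hL⟩, List.nodup_cons.mpr ⟨ha, hnd⟩,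
        List.forall_mem_cons.mpr ⟨hnn, hflow⟩⟩

theorem Acyclic.not_phiReach_otgt_osrc (hacyc : G.Acyclic φ) {oe : G.OEdge}
    (hpos : 0 < G.flowVal φ oe) : ¬ G.PhiReach φ ∅ (G.otgt oe) (G.osrc oe) := by
  intro hreach
  obtain ⟨L, hL, hnd, hflow⟩ := hreach.exists_nodup_walk
  have hsrc : ((L ++ [oe]).map G.osrc).Nodup := by
    rwa [List.map_append, List.map_singleton, hL]
  have hfst : ((L ++ [oe]).map Prod.fst).Nodup := by
    rw [List.map_append]
    refine List.nodup_append.mpr ⟨hL.nodup_fst hnd, List.nodup_singleton _, ?_⟩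
    rintro _ hmem _ hx rfl
    obtain ⟨oe', hoe', hfst⟩ := List.mem_map.mp hmem
    rw [List.mem_singleton.mp hx] at hfst
    rcases eq_or_eq_flip_of_fst_eq hfst with rfl | rfl
    · rw [List.map_append, List.nodup_append] at hsrc
      exact hsrc.2.2 _ (List.mem_map_of_mem hoe') _ (List.mem_singleton_self _) rfl
    · have := hflow _ hoe'
      rw [flowVal_flip, Prod.mk.eta] at this
      omega
  have hcycle : G.IsWalk (G.otgt oe) (L ++ [oe]) (G.otgt oe) :=
    hL.append (isWalk_cons.mpr ⟨rfl, isWalk_nil.mpr rfl⟩)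
  refine hacyc ⟨L ++ [oe], hcycle.isOrientedCycle (by simp) hfst hsrc, ?_,
    oe, List.mem_append_right _ (List.mem_singleton_self _), hpos⟩
  exact List.forall_mem_append.mpr ⟨hflow, List.forall_mem_singleton.mpr hpos.le⟩

variable (G) in
def inEdges (W : Finset G.V) : Finset G.OEdge :=
  Finset.univ.filter fun oe => G.osrc oe ∉ W ∧ G.otgt oe ∈ W

theorem sum_inEdges {M : Type*} [AddCommMonoid M] (W : Finset G.V) (f : G.OEdge → M) :
    ∑ oe ∈ G.inEdges W, f oe =
      ∑ e, ((if G.src e ∉ W ∧ G.tgt e ∈ W then f (e, true) else 0) +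
        (if G.tgt e ∉ W ∧ G.src e ∈ W then f (e, false) else 0)) := by
  rw [inEdges, Finset.sum_filter, Fintype.sum_prod_type]
  simp [osrc, otgt]

theorem card_inEdges (W : Finset G.V) : (G.inEdges W).card = G.delta W := by
  rw [Finset.card_eq_sum_ones, sum_inEdges, delta, Finset.card_filter]
  refine Finset.sum_congr rfl fun e _ => ?_
  by_cases hs : G.src e ∈ W <;> by_cases ht : G.tgt e ∈ W <;> simp [crossing, hs, ht]

theorem sum_divOf (W : Finset G.V) :
    ∑ v ∈ W, G.divOf φ v = ∑ oe ∈ G.inEdges W, G.flowVal φ oe := by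
  simp only [divOf, Finset.sum_sub_distrib]
  rw [Finset.sum_comm, Finset.sum_comm (s := W), sum_inEdges, ← Finset.sum_sub_distrib]
  refine Finset.sum_congr rfl fun e _ => ?_
  by_cases hs : G.src e ∈ W <;> by_cases ht : G.tgt e ∈ W <;>
    simp [Finset.sum_ite_eq, hs, ht, flowVal]

theorem beta_canPol_eq (heq : ∀ v, 2 * D v + G.divOf φ v = G.K v) (W : Finset G.V) :
    G.beta G.canPol D W = ((∑ oe ∈ G.inEdges W, (1 - G.flowVal φ oe) : ℤ) : ℚ) / 2 := by
  have hD : ∑ v ∈ W, (2 * D v : ℚ) = ∑ v ∈ W, (G.K v : ℚ) - ∑ v ∈ W, (G.divOf φ v : ℚ) := by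
    rw [eq_sub_iff_add_eq, ← Finset.sum_add_distrib]
    exact Finset.sum_congr rfl fun v _ => by exact_mod_cast heq v
  rw [← Finset.mul_sum] at hD
  rw [Finset.sum_sub_distrib, Finset.sum_const, card_inEdges, nsmul_one, ← sum_divOf, beta]
  simp only [canPol, ← Finset.sum_div]
  push_cast
  linarith

theorem flowVal_pos_of_mem_inEdges {Z : Finset G.V}
    (hZ : ∀ a b, a ∈ Z → G.phiStep φ ∅ a b → b ∈ Z) {oe : G.OEdge} (hoe : oe ∈ G.inEdges Z) :
    0 < G.flowVal φ oe := by
  obtain ⟨hsrc, htgt⟩ := (Finset.mem_filter.mp hoe).2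
  by_contra! hle
  refine hsrc (hZ _ _ htgt ⟨(oe.1, !oe.2), Finset.notMem_empty _, ?_, ?_, ?_⟩) <;> simp [hle]

open Classical in
theorem Semistable.flowVal_le_one (hss : G.Semistable G.canPol D) (hacyc : G.Acyclic φ)
    (heq : ∀ v, 2 * D v + G.divOf φ v = G.K v) (oe : G.OEdge) : G.flowVal φ oe ≤ 1 := by
  by_contra! hgt
  set Z := Finset.univ.filter (G.PhiReach φ ∅ (G.otgt oe))
  have hZ : ∀ a b, a ∈ Z → G.phiStep φ ∅ a b → b ∈ Z := fun a b ha hab => by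
    simp only [Z, Finset.mem_filter] at ha ⊢
    exact ⟨Finset.mem_univ _, ha.2.tail hab⟩
  have hoe : oe ∈ G.inEdges Z := by
    simpa [inEdges, Z] using
      ⟨hacyc.not_phiReach_otgt_osrc (by omega), Relation.ReflTransGen.refl⟩
  have hneg : ∑ oe' ∈ G.inEdges Z, (1 - G.flowVal φ oe') < ∑ _oe' ∈ G.inEdges Z, 0 := by
    refine Finset.sum_lt_sum (fun oe' h' => ?_) ⟨oe, hoe, by omega⟩
    have := flowVal_pos_of_mem_inEdges hZ h'
    omega
  rw [Finset.sum_const_zero] at hneg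
  have hβ := hss Z fun h => (Finset.mem_filter.mp hoe).2.1 (h ▸ Finset.mem_univ _)
  rw [beta_canPol_eq heq] at hβ
  have : ((∑ oe' ∈ G.inEdges Z, (1 - G.flowVal φ oe') : ℤ) : ℚ) < 0 := by exact_mod_cast hneg
  linarith

end WGraph

attribute [local instance] Classical.propDecidable

theorem stmt3_general (G : WGraph) (D : G.V → ℤ)
    (hss : G.Semistable G.canPol D) (φ : G.E → ℤ) (hacyc : G.Acyclic φ)
    (heq : ∀ v, 2 * D v + G.divOf φ v = G.K v) (W : Finset G.V) :
    G.beta G.canPol D W = 0 ↔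
      ∀ oe : G.OEdge, G.osrc oe ∉ W → G.otgt oe ∈ W → G.flowVal φ oe = 1 := by
  have hle := hss.flowVal_le_one hacyc heq
  rw [G.beta_canPol_eq heq, div_eq_zero_iff, or_iff_left two_ne_zero, Int.cast_eq_zero,
    Finset.sum_eq_zero_iff_of_nonneg fun oe _ => sub_nonneg.mpr (hle oe)]
  simp only [WGraph.inEdges, Finset.mem_filter, Finset.mem_univ, true_and, and_imp, sub_eq_zero,
    eq_comm (a := (1 : ℤ))]

/-- For a semistable `D` with acyclic flow `φ` satisfying
`2D + Div(φ) = K_Γ`: `β_D(V) = 0` iff `φ(e) = 1` for every oriented edge `e`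
from the complement of `V` into `V`. -/
theorem stmt3 (G : WGraph) (hconn : G.Connected) (D : G.V → ℤ)
    (hss : G.Semistable G.canPol D) (φ : G.E → ℤ) (hacyc : G.Acyclic φ)
    (heq : ∀ v, 2 * D v + G.divOf φ v = G.K v) (W : Finset G.V) :
    G.beta G.canPol D W = 0 ↔
      ∀ oe : G.OEdge, G.osrc oe ∉ W → G.otgt oe ∈ W → G.flowVal φ oe = 1 :=
  stmt3_general G D hss φ hacyc heq W
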